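/- Let M be the real 12×12 matrix of the linear autonomous system, in the variables s = (U₁⁰⁰,U₁¹⁰,U₁⁰¹,U₁²⁰,U₁¹¹,U₁⁰²,U₂⁰⁰,U₂¹⁰,U₂⁰¹,U₂²⁰,U₂¹¹,U₂⁰²): U̇₁⁰⁰ = −U₁⁰⁰ − U₁¹⁰ − (2/3)U₁⁰² − U₂⁰¹ − (4/9)U₂¹¹; U̇₁¹⁰ = −U₁¹⁰ − U₁²⁰ − U₂¹¹; U̇₁⁰¹ = −U₁⁰¹ − U₁¹¹ − U₂⁰²; U̇₁²⁰ = −U₁²⁰; U̇₁¹¹ = −U₁¹¹; U̇₁⁰² = −U₁⁰²; U̇₂⁰⁰ = −3U₂⁰⁰ + (1/3)U₂¹⁰ − (8/27)U₂²⁰ − (4/9)U₁¹¹ − (1/3)U₁⁰¹; U̇₂¹⁰ = −3U₂¹⁰ + (1/3)U₂²⁰ − (1/3)U₁¹¹; U̇₂⁰¹ = −3U₂⁰¹ + (1/3)U₂¹¹ − (1/3)U₁⁰²; U̇₂²⁰ = −3U₂²⁰; U̇₂¹¹ = −3U₂¹¹; U̇₂⁰² = −3U₂⁰². Then the characteristic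 polynomial of M equals (X+1)⁶(X+3)⁶, and consequently for every γ ∈ (0,1) and every differentiable solution s : ℝ → ℝ¹² of s′ = Ms there exists C ≥ 0 such that ‖s(t)‖ ≤ C e^{−γt} for all t ≥ 0. -/

import Mathlib

/-!
Listing the variables in the order U₁⁰⁰, U₂⁰⁰, U₂⁰¹, U₁¹⁰, U₁⁰¹, U₂¹⁰, U₁²⁰, U₁¹¹, U₁⁰², U₂²⁰, U₂¹¹,
U₂⁰² makes `Mfast` upper triangular, with six diagonal entries `-1` and six `-3`; this gives the
characteristic polynomial. In that order each coordinate solves `u' = a u + f` with `a ≤ -1 < -γ`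
and `f` a combination of later coordinates, so by backward induction `f = O(e^{-γt})`, and then
`u = O(e^{-γt})` because `e^{-at} u(t) - (K/c) e^{ct}` is antitone on `[0, ∞)`, where
`|f| ≤ K e^{-γt}` and `c = -(a + γ) > 0`.
-/

open Polynomial

/-- The 12×12 coefficient matrix of the autonomous fast system, in the variables
`s = (U₁⁰⁰,U₁¹⁰,U₁⁰¹,U₁²⁰,U₁¹¹,U₁⁰²,U₂⁰⁰,U₂¹⁰,U₂⁰¹,U₂²⁰,U₂¹¹,U₂⁰²)`. -/
noncomputable def Mfast : Matrix (Fin 12) (Fin 12) ℝ :=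
  !![-1, -1, 0, 0, 0, -2/3, 0, 0, -1, 0, -4/9, 0;
     0, -1, 0, -1, 0, 0, 0, 0, 0, 0, -1, 0;
     0, 0, -1, 0, -1, 0, 0, 0, 0, 0, 0, -1;
     0, 0, 0, -1, 0, 0, 0, 0, 0, 0, 0, 0;
     0, 0, 0, 0, -1, 0, 0, 0, 0, 0, 0, 0;
     0, 0, 0, 0, 0, -1, 0, 0, 0, 0, 0, 0;
     0, 0, -1/3, 0, -4/9, 0, -3, 1/3, 0, -8/27, 0, 0;
     0, 0, 0, 0, -1/3, 0, 0, -3, 0, 1/3, 0, 0;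
     0, 0, 0, 0, 0, -1/3, 0, 0, -3, 0, 1/3, 0;
     0, 0, 0, 0, 0, 0, 0, 0, 0, -3, 0, 0;
     0, 0, 0, 0, 0, 0, 0, 0, 0, 0, -3, 0;
     0, 0, 0, 0, 0, 0, 0, 0, 0, 0, 0, -3]

open Asymptotics Filter Set Real
open scoped Matrix

theorem le_max_mul_exp_of_hasDerivAt {a γ K : ℝ} (hγ : a + γ < 0) {u f : ℝ → ℝ}
    (hu : ∀ t, HasDerivAt u (a * u t + f t) t)
    (hf : ∀ t, 0 ≤ t → f t ≤ K * exp (-γ * t)) {t : ℝ} (ht : 0 ≤ t) :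
    u t ≤ max (u 0) (K / -(a + γ)) * exp (-γ * t) := by
  set c := -(a + γ) with hc_def
  have hc : c ≠ 0 := by linarith
  set B := K / c
  have hBc : B * c = K := div_mul_cancel₀ K hc
  have hφ : ∀ τ, HasDerivAt (fun τ => exp (-a * τ) * u τ - B * exp (c * τ))
      (exp (-a * τ) * f τ - K * exp (c * τ)) τ := by
    intro τ
    have hexp := ((hasDerivAt_id' τ).const_mul (-a)).exp
    have hexp' := (((hasDerivAt_id' τ).const_mul c).exp).const_mul B
    refine ((hexp.mul (hu τ)).sub hexp').congr_deriv ?_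
    linear_combination -exp (c * τ) * hBc
  have hφ_nonpos : ∀ τ, 0 ≤ τ → exp (-a * τ) * f τ - K * exp (c * τ) ≤ 0 := by
    intro τ hτ
    have : exp (-a * τ) * (K * exp (-γ * τ)) = K * exp (c * τ) := by
      rw [mul_left_comm, ← exp_add, hc_def]; ring_nf
    linarith [mul_le_mul_of_nonneg_left (hf τ hτ) (exp_pos (-a * τ)).le]
  have hanti : AntitoneOn (fun τ => exp (-a * τ) * u τ - B * exp (c * τ)) (Ici 0) := by
    refine antitoneOn_of_hasDerivWithinAt_nonpos (convex_Ici 0)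
      (fun τ _ => (hφ τ).continuousAt.continuousWithinAt)
      (fun τ _ => (hφ τ).hasDerivWithinAt) fun τ hτ => hφ_nonpos τ ?_
    rw [interior_Ici] at hτ
    exact le_of_lt hτ
  have hmono := hanti (mem_Ici.2 le_rfl) ht ht
  simp only [mul_zero, exp_zero, one_mul, mul_one] at hmono
  have hexp_cancel : exp (a * t) * exp (-a * t) = 1 := by rw [← exp_add]; simp
  have hexp_mul : exp (a * t) * exp (c * t) = exp (-γ * t) := by rw [← exp_add, hc_def]; ring_nf
  have hdecay : exp (a * t) ≤ exp (-γ * t) := exp_le_exp.2 (by nlinarith)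
  have key : u t ≤ (u 0 - B) * exp (a * t) + B * exp (-γ * t) := by
    linear_combination
      mul_le_mul_of_nonneg_left hmono (exp_pos (a * t)).le - u t * hexp_cancel + B * hexp_mul
  rcases le_total (u 0) B with h | h
  · rw [max_eq_right h]
    nlinarith [exp_pos (a * t)]
  · rw [max_eq_left h]
    nlinarith

theorem abs_le_max_mul_exp_of_hasDerivAt {a γ K : ℝ} (hγ : a + γ < 0) {u f : ℝ → ℝ}
    (hu : ∀ t, HasDerivAt u (a * u t + f t) t)
    (hf : ∀ t, 0 ≤ t → |f t| ≤ K * exp (-γ * t)) {t : ℝ} (ht : 0 ≤ t) :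
    |u t| ≤ max |u 0| (K / -(a + γ)) * exp (-γ * t) := by
  have hup := le_max_mul_exp_of_hasDerivAt hγ hu (fun τ hτ => (le_abs_self _).trans (hf τ hτ)) ht
  have hlow := le_max_mul_exp_of_hasDerivAt (u := -u) (f := -f) hγ
    (fun τ => by simpa [mul_neg, neg_add, add_comm] using (hu τ).neg)
    (fun τ hτ => (neg_le_abs _).trans (hf τ hτ)) ht
  have hE := (exp_pos (-γ * t)).le
  have hmax_up :=
    mul_le_mul_of_nonneg_right (max_le_max_right (K / -(a + γ)) (le_abs_self (u 0))) hE
  have hmax_low :=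
    mul_le_mul_of_nonneg_right (max_le_max_right (K / -(a + γ)) (neg_le_abs (u 0))) hE
  simp only [Pi.neg_apply] at hlow
  rw [abs_le]
  constructor <;> linarith

theorem isBigO_exp_of_hasDerivAt_mul_add {a γ : ℝ} (hγ : a + γ < 0) {u f : ℝ → ℝ}
    (hu : ∀ t, HasDerivAt u (a * u t + f t) t)
    (hf : f =O[𝓟 (Ici 0)] fun t => exp (-γ * t)) :
    u =O[𝓟 (Ici 0)] fun t => exp (-γ * t) := by
  obtain ⟨K, hK⟩ := isBigO_principal.1 hf
  simp only [norm_eq_abs, abs_exp] at hK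
  refine isBigO_principal.2 ⟨max |u 0| (K / -(a + γ)), fun t ht => ?_⟩
  rw [norm_eq_abs, norm_eq_abs, abs_exp]
  exact abs_le_max_mul_exp_of_hasDerivAt hγ hu hK ht

theorem Matrix.IsUpperTriangular.isBigO_exp_of_hasDerivAt {ι : Type*} [Fintype ι]
    [LinearOrder ι] {A : Matrix ι ι ℝ} (hA : A.IsUpperTriangular) {γ : ℝ} (hγ : ∀ i, A i i + γ < 0)
    {s : ℝ → ι → ℝ} (hs : ∀ t, HasDerivAt s (A *ᵥ s t) t) :
    s =O[𝓟 (Ici 0)] fun t => exp (-γ * t) := by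
  refine isBigO_pi.2 fun i => ?_
  induction i using WellFoundedGT.induction with
  | _ i ih =>
  refine isBigO_exp_of_hasDerivAt_mul_add (hγ i)
    (f := fun t => ∑ j ∈ Finset.univ.erase i, A i j * s t j) (fun t => ?_)
    (IsBigO.fun_sum fun j hj => ?_)
  · have hrow : (A *ᵥ s t) i = A i i * s t i + ∑ j ∈ Finset.univ.erase i, A i j * s t j := by
      rw [Matrix.mulVec, dotProduct, ← Finset.add_sum_erase _ _ (Finset.mem_univ i)]
    exact hrow ▸ hasDerivAt_pi.1 (hs t) i
  · rcases lt_or_gt_of_ne (Finset.ne_of_mem_erase hj) with hji | hij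
    · simpa [hA hji] using isBigO_zero _ _
    · exact (ih j hij).const_mul_left _

theorem HasDerivAt.comp_equiv_submatrix_mulVec {𝕜 ι κ : Type*} [NontriviallyNormedField 𝕜]
    [Fintype ι] [Fintype κ] {A : Matrix ι ι 𝕜} (e : κ ≃ ι) {s : 𝕜 → ι → 𝕜} {t : 𝕜}
    (hs : HasDerivAt s (A *ᵥ s t) t) :
    HasDerivAt (fun τ => s τ ∘ e) (A.submatrix e e *ᵥ (s t ∘ e)) t :=
  hasDerivAt_pi.2 fun i => by
    simpa [Matrix.submatrix_mulVec_equiv, Function.comp_def] using hasDerivAt_pi.1 hs (e i)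

def triangularOrder : Equiv.Perm (Fin 12) where
  toFun := ![0, 6, 8, 1, 2, 7, 3, 4, 5, 9, 10, 11]
  invFun := ![0, 3, 4, 6, 7, 8, 1, 5, 2, 9, 10, 11]
  left_inv := by decide
  right_inv := by decide

theorem Mfast_submatrix_triangularOrder_isUpperTriangular :
    (Mfast.submatrix triangularOrder triangularOrder).IsUpperTriangular := by
  intro i j hji
  fin_cases i <;> fin_cases j <;> first | rfl | exact absurd hji (by decide)

theorem Mfast_apply_self_le (i : Fin 12) : Mfast i i ≤ -1 := by
  fin_cases i <;> norm_num [Mfast]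

theorem Mfast_charpoly : Mfast.charpoly = (X + 1) ^ 6 * (X + 3) ^ 6 := by
  rw [← Mfast.charpoly_reindex triangularOrder.symm, Matrix.reindex_apply, Equiv.symm_symm,
    Matrix.charpoly_of_isUpperTriangular _ Mfast_submatrix_triangularOrder_isUpperTriangular]
  simp only [Matrix.submatrix_apply]
  rw [Equiv.prod_comp triangularOrder (fun i => X - C (Mfast i i))]
  simp only [Mfast, one_div, Matrix.of_apply, Matrix.cons_val', Matrix.cons_val_fin_one,
    Fin.prod_univ_succ, Fin.isValue, Matrix.cons_val_zero, map_neg, map_one, sub_neg_eq_add,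
    Matrix.cons_val_succ, map_ofNat, Finset.univ_unique, Fin.default_eq_zero, Finset.prod_const,
    Finset.card_singleton, pow_one]
  ring

/-- The characteristic polynomial of the fast system's matrix is `(X+1)⁶(X+3)⁶`, and
consequently every solution of `s′ = Ms` decays like `e^{−γt}` for any `γ ∈ (0,1)`. -/
theorem fast_system_charpoly_and_decay :
    Mfast.charpoly = (X + 1) ^ 6 * (X + 3) ^ 6 ∧
    ∀ γ : ℝ, 0 < γ → γ < 1 →
      ∀ s : ℝ → Fin 12 → ℝ,
        (∀ t : ℝ, HasDerivAt s (Mfast.mulVec (s t)) t) →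
        ∃ C : ℝ, 0 ≤ C ∧ ∀ t : ℝ, 0 ≤ t → ‖s t‖ ≤ C * Real.exp (-γ * t) := by
  refine ⟨Mfast_charpoly, fun γ _ hγ s hs => ?_⟩
  have hdecay_sorted := Mfast_submatrix_triangularOrder_isUpperTriangular.isBigO_exp_of_hasDerivAt
    (γ := γ) (fun i => by
      simp only [Matrix.submatrix_apply]; linarith [Mfast_apply_self_le (triangularOrder i)])
    fun t => (hs t).comp_equiv_submatrix_mulVec triangularOrder
  have hdecay : s =O[𝓟 (Ici 0)] fun t => exp (-γ * t) := isBigO_pi.2 fun i => by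
    simpa using isBigO_pi.1 hdecay_sorted (triangularOrder.symm i)
  obtain ⟨C, hC, hbound⟩ := hdecay.exists_nonneg
  refine ⟨C, hC, fun t ht => ?_⟩
  simpa using isBigOWith_principal.1 hbound t ht
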